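/- arXiv:0712.1597 — 2 statements merged into one kernel-verified Lean document; each statement's English description precedes it below -/
import Mathlib

section
/- The modified universal enveloping algebra Ũ of the Euclidean algebra e(2) is isomorphic, as a nonunital associative ℂ-algebra, to the preprojective algebra P(Q_∞) of type A_∞. Concretely: let Ũ be the complex vector space with basis {(m, k, n) : m ∈ ℕ, k ∈ ℤ, n ∈ ℕ} (the basis element (m,k,n) representing p₊^m a_k p₋^n) with bilinear multiplication (m,k,n)·(m′,k′,n′) = (m+m′, k−m′, n+n′) if k − m′ = k′ − n, and = 0 otherwise; and let P(Q_∞) be the quotient of the free nonunital associative ℂ-algebra on generators {ε_i, h_i, h̄_i : i ∈ ℤ} by the two-sided ideal generated by the elements ε_i ε_j − δ_{ij} ε_i, h_i − ε_{i+1} h_i, h_i − h_i ε_i, h̄_i − ε_i h̄_i, h̄_i − h̄_i ε_{i+1}, and h̄_i h_i − h_{i−1} h̄_{i−1} for all i, j ∈ ℤ. Then the assignment ε_i ↦ (0, i, 0), h_i ↦ (1, i, 0), h̄_i ↦ (0, i, 1) induces an isomorphism of nonunital ℂ-algebras P(Q_∞) → Ũ. -/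
/-- Generators of the preprojective algebra `P(Q_∞)` of type `A_∞`: trivial paths
`eps i` (`i ∈ ℤ`), arrows `arr i : i → i+1` and reversed arrows `rev i : i+1 → i`. -/
inductive QGen : Type
  | eps (i : ℤ)
  | arr (i : ℤ)
  | rev (i : ℤ)

/-- The free nonunital associative `ℂ`-algebra on the generators, realized as the
semigroup algebra of the free semigroup on the generators. -/
abbrev FNA : Type := MonoidAlgebra ℂ (FreeSemigroup QGen)

/-- The generators, viewed as elements of the free nonunital algebra. -/
noncomputable def gen (x : QGen) : FNA := MonoidAlgebra.single (FreeSemigroup.of x) 1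

/-- The defining relations of `P(Q_∞)`: `εᵢεⱼ − δᵢⱼεᵢ`, `hᵢ − ε_{i+1}hᵢ`, `hᵢ − hᵢεᵢ`,
`h̄ᵢ − εᵢh̄ᵢ`, `h̄ᵢ − h̄ᵢε_{i+1}`, and the Gelfand–Ponomarev relations
`h̄ᵢhᵢ − h_{i-1}h̄_{i-1}`. -/
inductive IsRel : FNA → Prop
  | eps_mul (i j : ℤ) :
      IsRel (gen (.eps i) * gen (.eps j) - if i = j then gen (.eps i) else 0)
  | arr_left (i : ℤ) : IsRel (gen (.arr i) - gen (.eps (i + 1)) * gen (.arr i))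
  | arr_right (i : ℤ) : IsRel (gen (.arr i) - gen (.arr i) * gen (.eps i))
  | rev_left (i : ℤ) : IsRel (gen (.rev i) - gen (.eps i) * gen (.rev i))
  | rev_right (i : ℤ) : IsRel (gen (.rev i) - gen (.rev i) * gen (.eps (i + 1)))
  | gp (i : ℤ) :
      IsRel (gen (.rev i) * gen (.arr i) - gen (.arr (i - 1)) * gen (.rev (i - 1)))

/-- The two-sided ideal of the (nonunital) algebra `FNA` generated by the relations:
the linear span of the relations and all their left/right/two-sided multiples. -/
noncomputable def relIdeal : Submodule ℂ FNA :=
  Submodule.span ℂ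
    {z : FNA | ∃ s, IsRel s ∧
      (z = s ∨ (∃ x, z = x * s) ∨ (∃ y, z = s * y) ∨ ∃ x y, z = x * s * y)}

/-- The preprojective algebra `P(Q_∞)` as a `ℂ`-vector space: the quotient of the free
nonunital algebra by the two-sided ideal generated by the relations.  Its multiplication
is induced by that of `FNA`. -/
abbrev PQInf : Type := FNA ⧸ relIdeal

/-- The modified enveloping algebra `Ũ` of `e(2)`, with basis `(m, k, n) ↔ p₊ᵐ aₖ p₋ⁿ`. -/
abbrev UTilde : Type := (ℕ × ℤ × ℕ) →₀ ℂ

/-- The multiplication of `Ũ`: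
`(m,k,n)·(m′,k′,n′) = (m+m′, k−m′, n+n′)` if `k − m′ = k′ − n`, and `0` otherwise. -/
noncomputable def umul (f g : UTilde) : UTilde :=
  f.sum fun p c => g.sum fun q d =>
    if p.2.1 - (q.1 : ℤ) = q.2.1 - (p.2.2 : ℤ) then
      Finsupp.single (p.1 + q.1, p.2.1 - (q.1 : ℤ), p.2.2 + q.2.2) (c * d)
    else 0

/-!
The images `(0,i,0)`, `(1,i,0)`, `(0,i,1)` of the generators satisfy the defining relations in `Ũ`,
so the assignment extends to an algebra map `P(Q_∞) → Ũ`. Conversely, `(m,k,n)` is sent to the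
class of the path `h_{k+m-1} ⋯ h_k h̄_k ⋯ h̄_{k+n-1} ε_{k+n}`. Modulo the relations, left
multiplication of such a normal path by a generator yields a normal path or zero, exactly as
left multiplication by the corresponding basis element does in `Ũ`: the idempotent relations
kill mismatched vertices, and the Gelfand–Ponomarev relation `h̄ᵢhᵢ = h_{i-1}h̄_{i-1}` moves an
`h̄` to the right past all the `h`'s. By induction on length, every path is therefore congruent
to the normal form of its image, so the two maps are mutually inverse.
-/

noncomputable section

namespace UTilde

def umulₗ : UTilde →ₗ[ℂ] UTilde →ₗ[ℂ] UTilde :=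
  Finsupp.lsum ℂ fun p => LinearMap.toSpanSingleton ℂ _ <| Finsupp.lsum ℂ fun q =>
    if p.2.1 - (q.1 : ℤ) = q.2.1 - (p.2.2 : ℤ) then
      Finsupp.lsingle (p.1 + q.1, p.2.1 - (q.1 : ℤ), p.2.2 + q.2.2)
    else 0

theorem umul_eq_umulₗ (f g : UTilde) : umul f g = umulₗ f g := by
  simp only [umul, umulₗ, Finsupp.lsum_apply, LinearMap.finsupp_sum_apply,
    LinearMap.toSpanSingleton_apply, LinearMap.smul_apply, Finsupp.smul_sum]
  refine Finsupp.sum_congr fun p _ => Finsupp.sum_congr fun q _ => ?_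
  split_ifs <;> simp [Finsupp.smul_single]

theorem umul_single_single (p q : ℕ × ℤ × ℕ) (c d : ℂ) :
    umul (Finsupp.single p c) (Finsupp.single q d) =
      if p.2.1 - (q.1 : ℤ) = q.2.1 - (p.2.2 : ℤ) then
        Finsupp.single (p.1 + q.1, p.2.1 - (q.1 : ℤ), p.2.2 + q.2.2) (c * d)
      else 0 := by
  rw [umul_eq_umulₗ, umulₗ]
  split_ifs <;> simp [*, Finsupp.smul_single]

theorem zero_umul (g : UTilde) : umul 0 g = 0 := by simp [umul_eq_umulₗ]

theorem umul_zero (f : UTilde) : umul f 0 = 0 := by simp [umul_eq_umulₗ]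

theorem add_umul (f f' g : UTilde) : umul (f + f') g = umul f g + umul f' g := by
  simp [umul_eq_umulₗ]

theorem umul_add (f g g' : UTilde) : umul f (g + g') = umul f g + umul f g' := by
  simp [umul_eq_umulₗ]

theorem smul_umul (c : ℂ) (f g : UTilde) : umul (c • f) g = c • umul f g := by
  simp [umul_eq_umulₗ]

theorem umul_smul (c : ℂ) (f g : UTilde) : umul f (c • g) = c • umul f g := by
  simp [umul_eq_umulₗ]

theorem umul_assoc (f g h : UTilde) : umul (umul f g) h = umul f (umul g h) := by
  simp only [umul_eq_umulₗ]
  induction f using Finsupp.induction_linear with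
  | zero => simp
  | add a b ha hb => simp [ha, hb]
  | single p c =>
  induction g using Finsupp.induction_linear with
  | zero => simp
  | add a b ha hb => simp [ha, hb]
  | single q d =>
  induction h using Finsupp.induction_linear with
  | zero => simp
  | add a b ha hb => simp [ha, hb]
  | single r e =>
  simp only [← umul_eq_umulₗ, umul_single_single]
  split_ifs <;> simp only [umul_single_single, zero_umul, umul_zero] <;> split_ifs <;>
    grind

end UTilde

/-- `UTilde` is a type of finitely supported functions and as such already carries the pointwise
multiplication; this synonym carries `umul` instead. -/
def UTildeAlg : Type := UTilde

namespace UTildeAlg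

instance : AddCommGroup UTildeAlg := inferInstanceAs (AddCommGroup UTilde)

instance : NonUnitalRing UTildeAlg where
  __ := (inferInstance : AddCommGroup UTildeAlg)
  mul := umul
  mul_assoc := UTilde.umul_assoc
  left_distrib := UTilde.umul_add
  right_distrib := UTilde.add_umul
  zero_mul := UTilde.zero_umul
  mul_zero := UTilde.umul_zero

instance : Module ℂ UTildeAlg := inferInstanceAs (Module ℂ UTilde)

instance : IsScalarTower ℂ UTildeAlg UTildeAlg := ⟨UTilde.smul_umul⟩

instance : SMulCommClass ℂ UTildeAlg UTildeAlg := ⟨fun c f g => (UTilde.umul_smul c f g).symm⟩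

end UTildeAlg

def QGen.toUTilde : QGen → UTilde
  | .eps i => Finsupp.single (0, i, 0) 1
  | .arr i => Finsupp.single (1, i, 0) 1
  | .rev i => Finsupp.single (0, i, 1) 1

def evalWord : FreeSemigroup QGen →ₙ* UTildeAlg := FreeSemigroup.lift QGen.toUTilde

def fnaToUTilde : FNA →ₗ[ℂ] UTilde := (MonoidAlgebra.liftMagma ℂ evalWord : FNA →ₗ[ℂ] UTildeAlg)

theorem fnaToUTilde_mul (x y : FNA) :
    fnaToUTilde (x * y) = umul (fnaToUTilde x) (fnaToUTilde y) :=
  map_mul (MonoidAlgebra.liftMagma ℂ evalWord) x y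

theorem fnaToUTilde_gen (x : QGen) : fnaToUTilde (gen x) = x.toUTilde := by
  change MonoidAlgebra.liftMagma ℂ evalWord (MonoidAlgebra.ofMagma ℂ _ (.of x)) = _
  exact congr($((MonoidAlgebra.liftMagma ℂ).symm_apply_apply evalWord) (.of x))

theorem fnaToUTilde_eq_zero_of_isRel {s : FNA} (h : IsRel s) : fnaToUTilde s = 0 := by
  cases h <;> rw [map_sub, sub_eq_zero] <;>
    simp [apply_ite fnaToUTilde, fnaToUTilde_mul, fnaToUTilde_gen, QGen.toUTilde,
      UTilde.umul_single_single]

theorem relIdeal_le_ker_fnaToUTilde : relIdeal ≤ LinearMap.ker fnaToUTilde := by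
  rw [relIdeal, Submodule.span_le]
  rintro z ⟨s, hs, rfl | ⟨x, rfl⟩ | ⟨y, rfl⟩ | ⟨x, y, rfl⟩⟩ <;>
    simp [fnaToUTilde_mul, fnaToUTilde_eq_zero_of_isRel hs, UTilde.umul_zero, UTilde.zero_umul]

theorem mul_mem_relIdeal_left (x : FNA) {z : FNA} (hz : z ∈ relIdeal) : x * z ∈ relIdeal := by
  induction hz using Submodule.span_induction with
  | mem z hz =>
    obtain ⟨s, hs, rfl | ⟨a, rfl⟩ | ⟨b, rfl⟩ | ⟨a, b, rfl⟩⟩ := hz <;> apply Submodule.subset_span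
    exacts [⟨z, hs, .inr (.inl ⟨x, rfl⟩)⟩, ⟨s, hs, .inr (.inl ⟨x * a, (mul_assoc ..).symm⟩)⟩,
      ⟨s, hs, .inr (.inr (.inr ⟨x, b, (mul_assoc ..).symm⟩))⟩,
      ⟨s, hs, .inr (.inr (.inr ⟨x * a, b, by simp only [mul_assoc]⟩))⟩]
  | zero => rw [mul_zero]; exact zero_mem _
  | add a b _ _ ha hb => rw [mul_add]; exact add_mem ha hb
  | smul c a _ ha => rw [mul_smul_comm]; exact Submodule.smul_mem _ c ha

theorem mul_mem_relIdeal_right (y : FNA) {z : FNA} (hz : z ∈ relIdeal) : z * y ∈ relIdeal := by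
  induction hz using Submodule.span_induction with
  | mem z hz =>
    obtain ⟨s, hs, rfl | ⟨a, rfl⟩ | ⟨b, rfl⟩ | ⟨a, b, rfl⟩⟩ := hz <;> apply Submodule.subset_span
    exacts [⟨z, hs, .inr (.inr (.inl ⟨y, rfl⟩))⟩, ⟨s, hs, .inr (.inr (.inr ⟨a, y, rfl⟩))⟩,
      ⟨s, hs, .inr (.inr (.inl ⟨b * y, mul_assoc ..⟩))⟩,
      ⟨s, hs, .inr (.inr (.inr ⟨a, b * y, (mul_assoc ..)⟩))⟩]
  | zero => rw [zero_mul]; exact zero_mem _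
  | add a b _ _ ha hb => rw [add_mul]; exact add_mem ha hb
  | smul c a _ ha => rw [smul_mul_assoc]; exact Submodule.smul_mem _ c ha

theorem mkQ_mul_left_congr (x : FNA) {a b : FNA} (h : relIdeal.mkQ a = relIdeal.mkQ b) :
    relIdeal.mkQ (x * a) = relIdeal.mkQ (x * b) := by
  rw [Submodule.mkQ_apply, Submodule.mkQ_apply, Submodule.Quotient.eq, ← mul_sub] at *
  exact mul_mem_relIdeal_left x h

theorem mkQ_mul_right_congr (y : FNA) {a b : FNA} (h : relIdeal.mkQ a = relIdeal.mkQ b) :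
    relIdeal.mkQ (a * y) = relIdeal.mkQ (b * y) := by
  rw [Submodule.mkQ_apply, Submodule.mkQ_apply, Submodule.Quotient.eq, ← sub_mul] at *
  exact mul_mem_relIdeal_right y h

theorem mkQ_eq_of_isRel {a b : FNA} (h : IsRel (a - b)) : relIdeal.mkQ a = relIdeal.mkQ b :=
  (Submodule.Quotient.eq relIdeal).2 (Submodule.subset_span ⟨a - b, h, .inl rfl⟩)

def revWord : ℕ → ℤ → FreeSemigroup QGen
  | 0, k => .of (.eps k)
  | n + 1, k => .of (.rev k) * revWord n (k + 1)

def normalWord : ℕ → ℤ → ℕ → FreeSemigroup QGen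
  | 0, k, n => revWord n k
  | m + 1, k, n => .of (.arr (k + m)) * normalWord m k n

theorem single_of_mul (x : QGen) (w : FreeSemigroup QGen) :
    (MonoidAlgebra.single (.of x * w) 1 : FNA) = gen x * MonoidAlgebra.single w 1 := by
  rw [gen, MonoidAlgebra.single_mul_single, one_mul]

theorem fnaToUTilde_revWord (n : ℕ) (k : ℤ) :
    fnaToUTilde (MonoidAlgebra.single (revWord n k) 1) = Finsupp.single (0, k, n) 1 := by
  induction n generalizing k with
  | zero => exact fnaToUTilde_gen (.eps k)
  | succ n ih =>
    rw [revWord, single_of_mul, fnaToUTilde_mul, fnaToUTilde_gen, ih, QGen.toUTilde,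
      UTilde.umul_single_single, if_pos (by simp), one_mul]
    congr 1
    simp [add_comm]

theorem fnaToUTilde_normalWord (m : ℕ) (k : ℤ) (n : ℕ) :
    fnaToUTilde (MonoidAlgebra.single (normalWord m k n) 1) = Finsupp.single (m, k, n) 1 := by
  induction m with
  | zero => exact fnaToUTilde_revWord n k
  | succ m ih =>
    rw [normalWord, single_of_mul, fnaToUTilde_mul, fnaToUTilde_gen, ih, QGen.toUTilde,
      UTilde.umul_single_single, if_pos (by simp), one_mul]
    congr 1
    simp [add_comm]

def QGen.source : QGen → ℤ
  | .eps i => i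
  | .arr i => i
  | .rev i => i + 1

theorem mkQ_gen_mul_eps_source (x : QGen) :
    relIdeal.mkQ (gen x * gen (.eps x.source)) = relIdeal.mkQ (gen x) := by
  cases x with
  | eps i => simpa [QGen.source] using mkQ_eq_of_isRel (.eps_mul i i)
  | arr i => exact (mkQ_eq_of_isRel (.arr_right i)).symm
  | rev i => exact (mkQ_eq_of_isRel (.rev_right i)).symm

theorem mkQ_eps_mul_normalWord_self (m : ℕ) (k : ℤ) (n : ℕ) :
    relIdeal.mkQ (gen (.eps (k + m)) * MonoidAlgebra.single (normalWord m k n) 1) =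
      relIdeal.mkQ (MonoidAlgebra.single (normalWord m k n) 1) := by
  match m, n with
  | 0, 0 =>
    change relIdeal.mkQ (gen (.eps (k + (0 : ℕ))) * gen (.eps k)) = relIdeal.mkQ (gen (.eps k))
    simpa using mkQ_eq_of_isRel (.eps_mul k k)
  | 0, n + 1 =>
    rw [normalWord, revWord, single_of_mul, ← mul_assoc, Nat.cast_zero, add_zero]
    exact mkQ_mul_right_congr _ (mkQ_eq_of_isRel (.rev_left k)).symm
  | m + 1, n =>
    rw [normalWord, single_of_mul, ← mul_assoc, Nat.cast_succ, ← add_assoc]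
    exact mkQ_mul_right_congr _ (mkQ_eq_of_isRel (.arr_left (k + m))).symm

theorem mkQ_eps_mul_normalWord_of_ne {i : ℤ} {m : ℕ} {k : ℤ} (n : ℕ) (h : i ≠ k + m) :
    relIdeal.mkQ (gen (.eps i) * MonoidAlgebra.single (normalWord m k n) 1) = 0 := by
  rw [← mkQ_mul_left_congr _ (mkQ_eps_mul_normalWord_self m k n), ← mul_assoc,
    mkQ_mul_right_congr _ (mkQ_eq_of_isRel (.eps_mul i (k + m))), if_neg h, zero_mul, map_zero]

theorem mkQ_gen_mul_normalWord_of_ne {x : QGen} {m : ℕ} {k : ℤ} (n : ℕ) (h : x.source ≠ k + m) :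
    relIdeal.mkQ (gen x * MonoidAlgebra.single (normalWord m k n) 1) = 0 := by
  rw [← mkQ_mul_right_congr _ (mkQ_gen_mul_eps_source x), mul_assoc,
    mkQ_mul_left_congr _ ((mkQ_eps_mul_normalWord_of_ne n h).trans (map_zero _).symm), mul_zero,
    map_zero]

theorem mkQ_rev_mul_normalWord (m : ℕ) (k : ℤ) (n : ℕ) :
    relIdeal.mkQ (gen (.rev (k + m - 1)) * MonoidAlgebra.single (normalWord m k n) 1) =
      relIdeal.mkQ (MonoidAlgebra.single (normalWord m (k - 1) (n + 1)) 1) := by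
  induction m generalizing k with
  | zero => simp [normalWord, revWord, single_of_mul]
  | succ m ih =>
    rw [show k + ((m + 1 : ℕ) : ℤ) - 1 = k + m by push_cast; ring, normalWord, single_of_mul,
      ← mul_assoc, mkQ_mul_right_congr _ (mkQ_eq_of_isRel (.gp (k + m))), mul_assoc,
      mkQ_mul_left_congr _ (ih k), normalWord, single_of_mul]
    congr 4
    ring

def normalForm : UTilde →ₗ[ℂ] FNA :=
  Finsupp.linearCombination ℂ fun p => MonoidAlgebra.single (normalWord p.1 p.2.1 p.2.2) 1

theorem normalForm_single (m : ℕ) (k : ℤ) (n : ℕ) (c : ℂ) :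
    normalForm (Finsupp.single (m, k, n) c) = c • MonoidAlgebra.single (normalWord m k n) 1 :=
  Finsupp.linearCombination_single ℂ c _

theorem mkQ_gen_mul_normalWord (x : QGen) (m : ℕ) (k : ℤ) (n : ℕ) :
    relIdeal.mkQ (gen x * MonoidAlgebra.single (normalWord m k n) 1) =
      relIdeal.mkQ (normalForm (umul x.toUTilde (Finsupp.single (m, k, n) 1))) := by
  by_cases h : x.source = k + m
  swap
  · rw [mkQ_gen_mul_normalWord_of_ne n h]
    cases x <;> simp only [QGen.source] at h <;>
      simp only [QGen.toUTilde, UTilde.umul_single_single] <;>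
      rw [if_neg (by omega), map_zero, map_zero]
  cases x with
  | eps i =>
    obtain rfl : i = k + m := h
    simp only [QGen.toUTilde, UTilde.umul_single_single]
    rw [if_pos (by omega), add_sub_cancel_right, zero_add, zero_add, normalForm_single, mul_one,
      one_smul, mkQ_eps_mul_normalWord_self]
  | arr i =>
    obtain rfl : i = k + m := h
    simp only [QGen.toUTilde, UTilde.umul_single_single]
    rw [if_pos (by omega), add_sub_cancel_right, add_comm 1, zero_add, normalForm_single,
      mul_one, one_smul, normalWord, single_of_mul]
  | rev i =>
    obtain rfl : i = k + m - 1 := by simp only [QGen.source] at h; omega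
    simp only [QGen.toUTilde, UTilde.umul_single_single]
    rw [if_pos (by omega), show k + m - 1 - m = k - 1 by ring, zero_add, add_comm 1,
      normalForm_single, mul_one, one_smul, mkQ_rev_mul_normalWord]

theorem umul_toUTilde_single_source (x : QGen) :
    umul x.toUTilde (Finsupp.single (0, x.source, 0) 1) = x.toUTilde := by
  cases x <;> simp [QGen.toUTilde, QGen.source, UTilde.umul_single_single]

theorem mkQ_gen_mul_normalForm (x : QGen) (f : UTilde) :
    relIdeal.mkQ (gen x * normalForm f) = relIdeal.mkQ (normalForm (umul x.toUTilde f)) := by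
  induction f using Finsupp.induction_linear with
  | zero => simp [UTilde.umul_zero]
  | add f g hf hg => simp only [map_add, mul_add, UTilde.umul_add, hf, hg]
  | single p c =>
    obtain ⟨m, k, n⟩ := p
    rw [normalForm_single, mul_smul_comm, map_smul, ← Finsupp.smul_single_one, UTilde.umul_smul,
      map_smul, map_smul, mkQ_gen_mul_normalWord]

theorem mkQ_normalForm_fnaToUTilde_single (w : FreeSemigroup QGen) :
    relIdeal.mkQ (normalForm (fnaToUTilde (MonoidAlgebra.single w 1))) =
      relIdeal.mkQ (MonoidAlgebra.single w 1) := by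
  induction w using FreeSemigroup.recOnMul with
  | ih1 x =>
    have hunit : normalForm (Finsupp.single (0, x.source, 0) 1) = gen (.eps x.source) := by
      rw [normalForm_single, one_smul]; rfl
    rw [← gen, fnaToUTilde_gen, ← umul_toUTilde_single_source, ← mkQ_gen_mul_normalForm, hunit,
      mkQ_gen_mul_eps_source]
  | ih2 x w _ ih =>
    rw [single_of_mul, fnaToUTilde_mul, fnaToUTilde_gen, ← mkQ_gen_mul_normalForm,
      mkQ_mul_left_congr _ ih]

theorem mkQ_normalForm_fnaToUTilde (z : FNA) :
    relIdeal.mkQ (normalForm (fnaToUTilde z)) = relIdeal.mkQ z := by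
  induction z using MonoidAlgebra.induction_linear with
  | zero => simp
  | add y z hy hz => simp only [map_add, hy, hz]
  | single w c =>
    rw [← mul_one c, ← smul_eq_mul, ← MonoidAlgebra.smul_single, map_smul, map_smul, map_smul,
      map_smul, mkQ_normalForm_fnaToUTilde_single]

def quotToUTilde : PQInf →ₗ[ℂ] UTilde := relIdeal.liftQ fnaToUTilde relIdeal_le_ker_fnaToUTilde

def utildeToQuot : UTilde →ₗ[ℂ] PQInf := relIdeal.mkQ ∘ₗ normalForm

theorem quotToUTilde_comp_utildeToQuot : quotToUTilde ∘ₗ utildeToQuot = LinearMap.id := by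
  ext ⟨m, k, n⟩ : 2
  simp [quotToUTilde, utildeToQuot, normalForm_single, fnaToUTilde_normalWord]

theorem utildeToQuot_comp_quotToUTilde : utildeToQuot ∘ₗ quotToUTilde = LinearMap.id :=
  Submodule.linearMap_qext _ <| LinearMap.ext mkQ_normalForm_fnaToUTilde

end

/-- The assignment `εᵢ ↦ aᵢ = (0,i,0)`, `hᵢ ↦ p₊aᵢ = (1,i,0)`, `h̄ᵢ ↦ aᵢp₋ = (0,i,1)`
induces an isomorphism of nonunital `ℂ`-algebras `P(Q_∞) ≅ Ũ`: a `ℂ`-linear bijection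
from the quotient which intertwines the multiplications. -/
theorem stmt_11 :
    ∃ e : PQInf ≃ₗ[ℂ] UTilde,
      (∀ x y : FNA,
        e (Submodule.Quotient.mk (x * y)) =
          umul (e (Submodule.Quotient.mk x)) (e (Submodule.Quotient.mk y))) ∧
      (∀ i : ℤ, e (Submodule.Quotient.mk (gen (.eps i))) = Finsupp.single (0, i, 0) 1) ∧
      (∀ i : ℤ, e (Submodule.Quotient.mk (gen (.arr i))) = Finsupp.single (1, i, 0) 1) ∧
      (∀ i : ℤ, e (Submodule.Quotient.mk (gen (.rev i))) = Finsupp.single (0, i, 1) 1) := by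
  exact ⟨.ofLinearMap quotToUTilde utildeToQuot quotToUTilde_comp_utildeToQuot
    utildeToQuot_comp_quotToUTilde, fnaToUTilde_mul, fun i => fnaToUTilde_gen (.eps i),
    fun i => fnaToUTilde_gen (.arr i), fun i => fnaToUTilde_gen (.rev i)⟩
end

section
/- Fix finitely supported functions v, w : ℤ → ℕ, and let (x, y, s) be a stable tuple: x_k : ℂ^{v_k} → ℂ^{v_{k+1}}, y_k : ℂ^{v_{k+1}} → ℂ^{v_k}, s_k : ℂ^{w_k} → ℂ^{v_k} are linear maps such that the only family of subspaces S_k ⊆ ℂ^{v_k} with x_k(S_k) ⊆ S_{k+1}, y_k(S_{k+1}) ⊆ S_k and im s_k ⊆ S_k for all k is S_k = ℂ^{v_k} for all k. If g = (g_k)_{k∈ℤ} with g_k ∈ GL(v_k, ℂ) satisfies g_{k+1} ∘ x_k = x_k ∘ g_k, g_k ∘ y_k = y_k ∘ g_{k+1} and g_k ∘ s_k = s_k for all k ∈ ℤ, then g_k is the identity for all k. That is, the stabilizer in G_v = ∏_k GL(v_k, ℂ) of a stable point is trivial. -/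
/-! The fixed vectors of `g` form a graded subspace that is invariant under `x` and `y` (since
`g` commutes with them) and contains the images of `s` (since `g` fixes `s`); by stability it is
everything, so `g` is the identity. -/

namespace LinearMap

variable {R M N P : Type*} [Semiring R] [AddCommMonoid M] [AddCommMonoid N] [AddCommMonoid P]
  [Module R M] [Module R N] [Module R P]

theorem map_eqLocus_id_le_of_comm {a : M →ₗ[R] N} {g : M →ₗ[R] M} {g' : N →ₗ[R] N}
    (h : ∀ u, g' (a u) = a (g u)) : (eqLocus g id).map a ≤ eqLocus g' id := by
  rintro _ ⟨u, hu, rfl⟩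
  simp only [SetLike.mem_coe, mem_eqLocus, id_apply] at hu ⊢
  rw [h, hu]

theorem range_le_eqLocus_id {s : P →ₗ[R] M} {g : M →ₗ[R] M} (h : ∀ u, g (s u) = s u) :
    range s ≤ eqLocus g id := by
  rintro _ ⟨u, rfl⟩
  exact h u

end LinearMap

/-- The stabilizer in `G_v = ∏ₖ GL(vₖ, ℂ)` of a stable point of the type `A_∞` Nakajima
quiver variety data is trivial: if `(x, y, s)` is stable (no proper graded subspace is
invariant under all `xₖ, yₖ` and contains all the images of the `sₖ`) and `g` commutes
with `x` and `y` and fixes `s`, then `g` is the identity. -/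
theorem stmt_14 (v w : ℤ →₀ ℕ)
    (x : ∀ k : ℤ, (Fin (v k) → ℂ) →ₗ[ℂ] (Fin (v (k + 1)) → ℂ))
    (y : ∀ k : ℤ, (Fin (v (k + 1)) → ℂ) →ₗ[ℂ] (Fin (v k) → ℂ))
    (s : ∀ k : ℤ, (Fin (w k) → ℂ) →ₗ[ℂ] (Fin (v k) → ℂ))
    (stable : ∀ S : ∀ k : ℤ, Submodule ℂ (Fin (v k) → ℂ),
      (∀ k, (S k).map (x k) ≤ S (k + 1)) →
      (∀ k, (S (k + 1)).map (y k) ≤ S k) →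
      (∀ k, LinearMap.range (s k) ≤ S k) →
      ∀ k, S k = ⊤)
    (g : ∀ k : ℤ, (Fin (v k) → ℂ) ≃ₗ[ℂ] (Fin (v k) → ℂ))
    (hgx : ∀ k : ℤ, ∀ u, g (k + 1) (x k u) = x k (g k u))
    (hgy : ∀ k : ℤ, ∀ u, g k (y k u) = y k (g (k + 1) u))
    (hgs : ∀ k : ℤ, ∀ u, g k (s k u) = s k u) :
    ∀ k : ℤ, g k = LinearEquiv.refl ℂ (Fin (v k) → ℂ) := by
  intro k
  have hfix : (g k).toLinearMap.eqLocus LinearMap.id = ⊤ :=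
    stable (fun k => (g k).toLinearMap.eqLocus LinearMap.id)
      (fun k => LinearMap.map_eqLocus_id_le_of_comm (hgx k))
      (fun k => LinearMap.map_eqLocus_id_le_of_comm (hgy k))
      (fun k => LinearMap.range_le_eqLocus_id (hgs k)) k
  exact LinearEquiv.toLinearMap_injective (LinearMap.eqLocus_eq_top.mp hfix)
end
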